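/- For bases Δ, Δ' of Φ and admissible subsets Y ⊆ Δ, Y' ⊆ Δ', the face F_{Y'}^{Δ'} is contained in the closure of F_Y^Δ in A if and only if [λ₀(Δ') − λ₀(Δ)] ⊆ Y' and ⟨Y⟩ ⊆ ⟨Y'⟩. -/

import Mathlib

/-!
Common setup for Werner, "Compactifications of Bruhat-Tits buildings associated to
linear representations":  a finite-dimensional real vector space `A` (the apartment),
a root system `Φ` in the dual space together with a Weyl-group invariant inner
product, a finite Weyl-invariant set `Λ` of (K-)weights, and for every basis `Δ`
of `Φ` a highest weight `lam0 Δ ∈ Λ`.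
-/

open Pointwise Filter Topology Bornology
open scoped Classical

noncomputable section

/-- A set `M` of linear forms is *connected* if the graph with vertex set `M` and an
edge between `m` and `n` iff `inn m n ≠ 0` is connected. -/
def GraphConnected {D : Type*} (inn : D → D → ℝ) (M : Set D) : Prop :=
  ∀ m ∈ M, ∀ n ∈ M,
    Relation.ReflTransGen (fun x y => x ∈ M ∧ y ∈ M ∧ inn x y ≠ 0) m n

/-- The coefficients of `μ` as a linear combination of the elements of `Δ` (chosen
arbitrarily if one exists; it is unique when `Δ` is linearly independent). -/
noncomputable def coeffs {A : Type*} [AddCommGroup A] [Module ℝ A]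
    (Δ : Finset (Module.Dual ℝ A)) (μ : Module.Dual ℝ A) : Module.Dual ℝ A → ℝ :=
  if h : ∃ n : Module.Dual ℝ A → ℝ, μ = ∑ b ∈ Δ, n b • b then h.choose else fun _ => 0

/-- The support `[μ]` of `μ` with respect to the basis `Δ`: the set of elements of `Δ`
whose coefficient in `μ` is nonzero. -/
noncomputable def supp {A : Type*} [AddCommGroup A] [Module ℝ A]
    (Δ : Finset (Module.Dual ℝ A)) (μ : Module.Dual ℝ A) : Finset (Module.Dual ℝ A) :=
  Δ.filter fun a => coeffs Δ μ a ≠ 0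

/-- Raw data: a finite set `Φ` of roots in the dual of `A`, a product `inn` on the dual,
a finite set `Λ` of weights, and a highest weight `lam0 Δ` for every basis `Δ`. -/
structure RootWeightData (A : Type*) [NormedAddCommGroup A] [NormedSpace ℝ A]
    [FiniteDimensional ℝ A] where
  Φ : Finset (Module.Dual ℝ A)
  inn : Module.Dual ℝ A → Module.Dual ℝ A → ℝ
  Λ : Finset (Module.Dual ℝ A)
  lam0 : Finset (Module.Dual ℝ A) → Module.Dual ℝ A

namespace RootWeightData

variable {A : Type*} [NormedAddCommGroup A] [NormedSpace ℝ A] [FiniteDimensional ℝ A]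
variable (S : RootWeightData A)

/-- The reflection associated to the root `a`. -/
def refl (a : Module.Dual ℝ A) : Function.End (Module.Dual ℝ A) :=
  fun x => x - (2 * S.inn x a / S.inn a a) • a

/-- The Weyl group `W`, generated by the reflections in the roots. -/
def weyl : Submonoid (Function.End (Module.Dual ℝ A)) :=
  Submonoid.closure {f | ∃ a ∈ S.Φ, f = S.refl a}

/-- `Δ` is a basis of the root system `Φ`: a linearly independent subset of `Φ` such
that every root is a nonnegative or nonpositive linear combination of `Δ`. -/
def IsBase (Δ : Finset (Module.Dual ℝ A)) : Prop :=
  (↑Δ : Set (Module.Dual ℝ A)) ⊆ (S.Φ : Set (Module.Dual ℝ A)) ∧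
  LinearIndependent ℝ (fun a : (Δ : Set (Module.Dual ℝ A)) => (a : Module.Dual ℝ A)) ∧
  ∀ a ∈ S.Φ,
    (∃ n : Module.Dual ℝ A → ℝ, (∀ b ∈ Δ, 0 ≤ n b) ∧ a = ∑ b ∈ Δ, n b • b) ∨
    (∃ n : Module.Dual ℝ A → ℝ, (∀ b ∈ Δ, 0 ≤ n b) ∧ a = -∑ b ∈ Δ, n b • b)

/-- `Y` is an admissible subset of the basis `Δ`: `Y ⊆ Δ` and `Y ∪ {λ₀(Δ)}` is
connected. -/
def Admissible (Δ Y : Finset (Module.Dual ℝ A)) : Prop :=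
  Y ⊆ Δ ∧ GraphConnected S.inn ((↑Y : Set (Module.Dual ℝ A)) ∪ {S.lam0 Δ})

end RootWeightData

/-- The whole setting of Werner's paper: the data of `RootWeightData`, where `Φ` is a
(crystallographic, possibly non-reduced) root system spanning the dual of `A`, `inn` is
a Weyl-invariant inner product, `Λ` is a finite Weyl-invariant set of weights, and
`lam0` picks, Weyl-equivariantly, a highest weight for each basis, dominating all of
`Λ`; moreover a subset of a basis is admissible iff it is the support of
`λ₀(Δ) - λ` for some weight `λ`. -/
structure RootWeightSystem (A : Type*) [NormedAddCommGroup A] [NormedSpace ℝ A]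
    [FiniteDimensional ℝ A] extends RootWeightData A where
  inn_symm : ∀ x y, inn x y = inn y x
  inn_add_left : ∀ x y z, inn (x + y) z = inn x z + inn y z
  inn_smul_left : ∀ (c : ℝ) (x y), inn (c • x) y = c * inn x y
  inn_pos : ∀ x, x ≠ 0 → 0 < inn x x
  root_ne_zero : ∀ a ∈ Φ, a ≠ (0 : Module.Dual ℝ A)
  neg_mem : ∀ a ∈ Φ, -a ∈ Φ
  refl_mem : ∀ a ∈ Φ, ∀ b ∈ Φ, toRootWeightData.refl a b ∈ Φ
  inn_weyl_invariant :
    ∀ w ∈ toRootWeightData.weyl, ∀ x y, inn (w x) (w y) = inn x y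
  phi_spans : Submodule.span ℝ (Φ : Set (Module.Dual ℝ A)) = ⊤
  exists_base : ∃ Δ, toRootWeightData.IsBase Δ
  base_cover : ∀ x : A, ∃ Δ, toRootWeightData.IsBase Δ ∧ ∀ a ∈ Δ, 0 ≤ a x
  base_weyl : ∀ w ∈ toRootWeightData.weyl, ∀ Δ, toRootWeightData.IsBase Δ →
    toRootWeightData.IsBase (Δ.image (w : Module.Dual ℝ A → Module.Dual ℝ A))
  lam0_mem : ∀ Δ, toRootWeightData.IsBase Δ → lam0 Δ ∈ Λ
  lam0_dominates : ∀ Δ, toRootWeightData.IsBase Δ → ∀ l ∈ Λ,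
    ∃ n : Module.Dual ℝ A → ℝ, (∀ a ∈ Δ, 0 ≤ n a) ∧ lam0 Δ - l = ∑ a ∈ Δ, n a • a
  weight_weyl_invariant : ∀ w ∈ toRootWeightData.weyl, ∀ l ∈ Λ, w l ∈ Λ
  lam0_equivariant : ∀ w ∈ toRootWeightData.weyl, ∀ Δ, toRootWeightData.IsBase Δ →
    lam0 (Δ.image (w : Module.Dual ℝ A → Module.Dual ℝ A)) = w (lam0 Δ)
  integrality : ∀ l ∈ Λ, ∀ a ∈ Φ, ∃ k : ℤ, 2 * inn l a / inn a a = (k : ℝ)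
  admissible_iff_support : ∀ Δ, toRootWeightData.IsBase Δ → ∀ Y ⊆ Δ,
    (toRootWeightData.Admissible Δ Y ↔ ∃ l ∈ Λ, supp Δ (lam0 Δ - l) = Y)

namespace RootWeightSystem

variable {A : Type*} [NormedAddCommGroup A] [NormedSpace ℝ A] [FiniteDimensional ℝ A]
variable (S : RootWeightSystem A)

/-- The face `F_Y^Δ` of the apartment `A` associated to a basis `Δ` and an admissible
subset `Y ⊆ Δ`. -/
def Face (Δ Y : Finset (Module.Dual ℝ A)) : Set A :=
  {x | (∀ a ∈ Y, a x = 0) ∧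
    ∀ l ∈ S.Λ, ¬ supp Δ (S.lam0 Δ - l) ⊆ Y → 0 < (S.lam0 Δ - l) x}

/-- `F` belongs to the collection `Σ` of faces. -/
def IsFace (F : Set A) : Prop :=
  ∃ Δ Y, S.toRootWeightData.IsBase Δ ∧ S.toRootWeightData.Admissible Δ Y ∧
    F = S.Face Δ Y

/-- The collection `Σ` of all faces. -/
def Faces : Type _ := {F : Set A // S.IsFace F}

/-- The relation identifying `(F, u)` and `(F, v)` when `u - v ∈ ⟨F⟩`; the quotient is
the disjoint union `Ā = ⊔_{F ∈ Σ} A/⟨F⟩`. -/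
def AbarRel (p q : S.Faces × A) : Prop :=
  p.1 = q.1 ∧ p.2 - q.2 ∈ Submodule.span ℝ p.1.val

/-- The compactified apartment `Ā = ⊔_{F ∈ Σ} A_F`, `A_F = A/⟨F⟩`. -/
def Abar : Type _ := Quot S.AbarRel

/-- `r_F(u)`, the image of `u ∈ A` in the stratum `A_F` of `Ā`. -/
def mkAbar (F : S.Faces) (u : A) : S.Abar := Quot.mk _ (F, u)

/-- The basic set `Γ_F(U) = ⋃_{F' ⊆ cl F} r_{F'}(U + F)` of `Ā`. -/
def Gamma (F : S.Faces) (U : Set A) : Set S.Abar :=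
  {p | ∃ F' : S.Faces, F'.val ⊆ closure F.val ∧ ∃ u ∈ U + F.val, p = S.mkAbar F' u}

/-- The topology of `Ā`, generated by the sets `Γ_F(U)` for `F ∈ Σ` and `U ⊆ A`
bounded and open. -/
instance : TopologicalSpace S.Abar :=
  TopologicalSpace.generateFrom
    {V : Set S.Abar | ∃ (F : S.Faces) (U : Set A),
      IsOpen U ∧ IsBounded U ∧ V = S.Gamma F U}

/-- `f_Ω(a) = inf {t : Ω ⊆ cl_Ā {z ∈ A : a(z) ≥ -t}} ∈ ℝ ∪ {±∞}`, where `A` is embedded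
in `Ā` as the stratum of the face `F₀ = {0}`. -/
def fOmega (F₀ : S.Faces) (Ω : Set S.Abar) (a : Module.Dual ℝ A) : EReal :=
  sInf ((fun t : ℝ => (t : EReal)) ''
    {t : ℝ | Ω ⊆ closure (S.mkAbar F₀ '' {z : A | -t ≤ a z})})

end RootWeightSystem


variable {A : Type*} [NormedAddCommGroup A] [NormedSpace ℝ A] [FiniteDimensional ℝ A]

/-!
The closure of `F_Y^Δ` is the polyhedron `{a = 0 for a ∈ Y, λ₀(Δ) - λ ≥ 0 for λ ∈ Λ}`: it is
closed, and the open segment from any of its points to a point of the (nonempty) face lies in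
the face. Granting this, `[λ₀(Δ') - λ₀(Δ)] ⊆ Y'` follows by evaluating `λ₀(Δ') - λ₀(Δ)` at a
point of `F_{Y'}^{Δ'}`, and `⟨Y⟩ ⊆ ⟨Y'⟩` because `F_{Y'}^{Δ'}` is a nonempty relatively open
subset of the annihilator of `Y'`, so a linear form vanishing on it lies in `⟨Y'⟩`. Conversely,
`λ₀(Δ') - λ₀(Δ)` vanishes on `F_{Y'}^{Δ'}`, hence there
`λ₀(Δ) - λ = (λ₀(Δ') - λ) - (λ₀(Δ') - λ₀(Δ)) ≥ 0`.
-/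

section DualCombinations

variable {V : Type*} [AddCommGroup V] [Module ℝ V]

lemma coeffs_spec {Δ : Finset (Module.Dual ℝ V)} {μ : Module.Dual ℝ V}
    (h : ∃ n : Module.Dual ℝ V → ℝ, μ = ∑ b ∈ Δ, n b • b) :
    μ = ∑ b ∈ Δ, coeffs Δ μ b • b := by
  rw [coeffs, dif_pos h]
  exact h.choose_spec

lemma supp_eq_filter {Δ : Finset (Module.Dual ℝ V)}
    (hΔ : LinearIndepOn ℝ id (Δ : Set (Module.Dual ℝ V))) {μ : Module.Dual ℝ V}
    {n : Module.Dual ℝ V → ℝ} (h : μ = ∑ b ∈ Δ, n b • b) :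
    supp Δ μ = Δ.filter (n · ≠ 0) := by
  have hdiff : ∑ b ∈ Δ, (coeffs Δ μ b - n b) • b = 0 := by
    simp only [sub_smul (M := Module.Dual ℝ V), Finset.sum_sub_distrib]
    rw [← coeffs_spec ⟨n, h⟩, ← h, sub_self]
  have hcoeffs : ∀ b ∈ Δ, coeffs Δ μ b = n b := fun b hb =>
    sub_eq_zero.1 (linearIndepOn_finset_iff.1 hΔ _ hdiff b hb)
  exact Finset.filter_congr fun b hb => by rw [hcoeffs b hb]

lemma apply_eq_zero_of_forall_mem_supp {Δ : Finset (Module.Dual ℝ V)} {μ : Module.Dual ℝ V}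
    (h : ∃ n : Module.Dual ℝ V → ℝ, μ = ∑ b ∈ Δ, n b • b) {x : V}
    (hx : ∀ a ∈ supp Δ μ, a x = 0) : μ x = 0 := by
  rw [coeffs_spec h]
  simp only [LinearMap.sum_apply, LinearMap.smul_apply, smul_eq_mul]
  refine Finset.sum_eq_zero fun b hb => ?_
  by_cases hc : coeffs Δ μ b = 0
  · rw [hc, zero_mul]
  · rw [hx b (Finset.mem_filter.2 ⟨hb, hc⟩), mul_zero]

end DualCombinations

lemma Submodule.mem_dualCoannihilator_span {R M : Type*} [CommSemiring R] [AddCommMonoid M]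
    [Module R M] {s : Set (Module.Dual R M)} {x : M} :
    x ∈ (span R s).dualCoannihilator ↔ ∀ f ∈ s, f x = 0 := by
  rw [← SetLike.mem_coe, coe_dualCoannihilator_span]
  rfl

lemma Module.Dual.exists_forall_apply_eq {K V : Type*} [Field K] [AddCommGroup V] [Module K V]
    [FiniteDimensional K V] {s : Set (Module.Dual K V)} (hs : LinearIndepOn K id s)
    (c : Module.Dual K V → K) : ∃ x : V, ∀ a ∈ s, a x = c a := by
  let B := Module.Basis.extend hs
  refine ⟨(Module.evalEquiv K V).symm (B.constr K fun b => c b), fun a ha => ?_⟩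
  rw [Module.apply_evalEquiv_symm_apply]
  simpa [B] using B.constr_basis K (fun b => c b) ⟨a, hs.subset_extend _ ha⟩

lemma Module.Dual.apply_eq_zero_of_forall_mem_inter_isOpen {V : Type*} [AddCommGroup V]
    [Module ℝ V] [TopologicalSpace V] [ContinuousAdd V] [ContinuousSMul ℝ V]
    {W : Submodule ℝ V} {U : Set V} (hU : IsOpen U) {x₀ : V} (hx₀W : x₀ ∈ W) (hx₀U : x₀ ∈ U)
    {f : Module.Dual ℝ V} (hf : ∀ x ∈ W, x ∈ U → f x = 0) {v : V} (hv : v ∈ W) : f v = 0 := by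
  have hline : Tendsto (fun t : ℝ => x₀ + t • v) (𝓝[≠] 0) (𝓝 x₀) := by
    have hcont : Continuous fun t : ℝ => x₀ + t • v := by fun_prop
    simpa using (hcont.tendsto 0).mono_left nhdsWithin_le_nhds
  obtain ⟨t, htU, ht⟩ := ((hline.eventually (hU.mem_nhds hx₀U)).and self_mem_nhdsWithin).exists
  have hzero := hf _ (W.add_mem hx₀W (W.smul_mem t hv)) htU
  rw [map_add, map_smul, hf x₀ hx₀W hx₀U, zero_add, smul_eq_mul] at hzero
  exact (mul_eq_zero.1 hzero).resolve_left ht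

namespace RootWeightSystem

variable (S : RootWeightSystem A) {Δ Y : Finset (Module.Dual ℝ A)}

def closedFace (Δ Y : Finset (Module.Dual ℝ A)) : Set A :=
  {x | (∀ a ∈ Y, a x = 0) ∧ ∀ l ∈ S.Λ, 0 ≤ (S.lam0 Δ - l) x}

lemma lam0_sub_apply_eq_zero (hΔ : S.IsBase Δ) {l : Module.Dual ℝ A} (hl : l ∈ S.Λ)
    (hs : supp Δ (S.lam0 Δ - l) ⊆ Y) {x : A} (hx : ∀ a ∈ Y, a x = 0) :
    (S.lam0 Δ - l) x = 0 :=
  have ⟨n, _, hn⟩ := S.lam0_dominates Δ hΔ l hl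
  apply_eq_zero_of_forall_mem_supp ⟨n, hn⟩ fun a ha => hx a (hs ha)

lemma face_subset_closedFace (hΔ : S.IsBase Δ) : S.Face Δ Y ⊆ S.closedFace Δ Y := by
  refine fun x hx => ⟨hx.1, fun l hl => ?_⟩
  by_cases hs : supp Δ (S.lam0 Δ - l) ⊆ Y
  · exact (S.lam0_sub_apply_eq_zero hΔ hl hs hx.1).ge
  · exact (hx.2 l hl hs).le

lemma isClosed_closedFace : IsClosed (S.closedFace Δ Y) := by
  simp only [closedFace, Set.ofPred_and, Set.ofPred_forall]
  exact (isClosed_biInter fun a _ => isClosed_eq (LinearMap.continuous_of_finiteDimensional a) continuous_const).inter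
    (isClosed_biInter fun l _ => isClosed_le continuous_const (LinearMap.continuous_of_finiteDimensional _))

lemma face_nonempty (hΔ : S.IsBase Δ) (hY : Y ⊆ Δ) : (S.Face Δ Y).Nonempty := by
  obtain ⟨x, hx⟩ := Module.Dual.exists_forall_apply_eq hΔ.2.1 fun a => if a ∈ Y then 0 else 1
  refine ⟨x, fun a ha => by rw [hx a (hY ha), if_pos ha], fun l hl hs => ?_⟩
  obtain ⟨n, hn0, hn⟩ := S.lam0_dominates Δ hΔ l hl
  rw [supp_eq_filter hΔ.2.1 hn] at hs
  obtain ⟨b, hb, hbY⟩ := Finset.not_subset.1 hs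
  obtain ⟨hbΔ, hnb⟩ := Finset.mem_filter.1 hb
  rw [hn]
  simp only [LinearMap.sum_apply, LinearMap.smul_apply, smul_eq_mul]
  refine Finset.sum_pos' (fun a ha => mul_nonneg (hn0 a ha) ?_) ⟨b, hbΔ, ?_⟩
  · rw [hx a ha]
    split_ifs <;> norm_num
  · rw [hx b hbΔ, if_neg hbY, mul_one]
    exact (hn0 b hbΔ).lt_of_ne' hnb

lemma openSegment_subset_face {x y : A} (hx : x ∈ S.closedFace Δ Y) (hy : y ∈ S.Face Δ Y) :
    openSegment ℝ x y ⊆ S.Face Δ Y := by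
  rintro _ ⟨s, t, hs, ht, -, rfl⟩
  refine ⟨fun a ha => ?_, fun l hl hns => ?_⟩
  · simp [hx.1 a ha, hy.1 a ha]
  · simp only [map_add, map_smul, smul_eq_mul]
    exact add_pos_of_nonneg_of_pos (mul_nonneg hs.le (hx.2 l hl)) (mul_pos ht (hy.2 l hl hns))

lemma closure_face (hΔ : S.IsBase Δ) (hY : Y ⊆ Δ) :
    closure (S.Face Δ Y) = S.closedFace Δ Y := by
  refine (closure_minimal (S.face_subset_closedFace hΔ) S.isClosed_closedFace).antisymm
    fun x hx => ?_
  obtain ⟨y, hy⟩ := S.face_nonempty hΔ hY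
  exact closure_mono (S.openSegment_subset_face hx hy)
    (segment_subset_closure_openSegment (left_mem_segment ℝ x y))

lemma mem_span_of_forall_face_apply_eq_zero (hΔ : S.IsBase Δ) (hY : Y ⊆ Δ)
    {a : Module.Dual ℝ A} (ha : ∀ x ∈ S.Face Δ Y, a x = 0) :
    a ∈ Submodule.span ℝ (Y : Set (Module.Dual ℝ A)) := by
  let U : Set A := {x | ∀ l ∈ S.Λ, ¬ supp Δ (S.lam0 Δ - l) ⊆ Y → 0 < (S.lam0 Δ - l) x}
  have hU : IsOpen U := by
    simp only [U, Set.ofPred_forall]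
    exact isOpen_biInter_finset fun l _ => isOpen_iInter_of_finite fun _ =>
      isOpen_lt continuous_const (LinearMap.continuous_of_finiteDimensional _)
  obtain ⟨x₀, hx₀⟩ := S.face_nonempty hΔ hY
  rw [← Subspace.dualCoannihilator_dualAnnihilator_eq (W := Submodule.span ℝ _),
    Submodule.mem_dualAnnihilator]
  exact fun v hv => Module.Dual.apply_eq_zero_of_forall_mem_inter_isOpen hU
    (Submodule.mem_dualCoannihilator_span.2 hx₀.1) hx₀.2
    (fun x hxW hxU => ha x ⟨Submodule.mem_dualCoannihilator_span.1 hxW, hxU⟩) hv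

end RootWeightSystem

/-- `F_{Y'}^{Δ'}` is contained in the closure of `F_Y^Δ` in `A`
iff `[λ₀(Δ') - λ₀(Δ)] ⊆ Y'` and `⟨Y⟩ ⊆ ⟨Y'⟩`. -/
theorem face_subset_closure_face_iff (S : RootWeightSystem A)
    (Δ Δ' Y Y' : Finset (Module.Dual ℝ A))
    (hΔ : S.toRootWeightData.IsBase Δ) (hΔ' : S.toRootWeightData.IsBase Δ')
    (hY : S.toRootWeightData.Admissible Δ Y)
    (hY' : S.toRootWeightData.Admissible Δ' Y') :
    S.Face Δ' Y' ⊆ closure (S.Face Δ Y) ↔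
      (supp Δ' (S.lam0 Δ' - S.lam0 Δ) ⊆ Y' ∧
        Submodule.span ℝ ((Y : Set (Module.Dual ℝ A))) ≤
          Submodule.span ℝ ((Y' : Set (Module.Dual ℝ A)))) := by
  rw [S.closure_face hΔ hY.1]
  constructor
  · intro h
    refine ⟨?_, Submodule.span_le.2 fun a ha =>
      S.mem_span_of_forall_face_apply_eq_zero hΔ' hY'.1 fun x hx => (h hx).1 a ha⟩
    by_contra hns
    obtain ⟨x₀, hx₀⟩ := S.face_nonempty hΔ' hY'.1
    have hpos := hx₀.2 _ (S.lam0_mem Δ hΔ) hns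
    have hnonneg := (h hx₀).2 _ (S.lam0_mem Δ' hΔ')
    simp only [LinearMap.sub_apply] at hpos hnonneg
    linarith
  · rintro ⟨hsupp, hspan⟩ x hx
    refine ⟨fun a ha => ?_, fun l hl => ?_⟩
    · exact (Submodule.mem_dualCoannihilator x).1 (Submodule.mem_dualCoannihilator_span.2 hx.1) a
        (hspan (Submodule.subset_span ha))
    · have hzero := S.lam0_sub_apply_eq_zero hΔ' (S.lam0_mem Δ hΔ) hsupp hx.1
      have hnonneg := (S.face_subset_closedFace hΔ' hx).2 l hl
      simp only [LinearMap.sub_apply] at hzero hnonneg ⊢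
      linarith
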